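/- arXiv:2403.04235 — 6 statements merged into one kernel-verified Lean document; each statement's English description precedes it below -/
import Mathlib

section
/- Let n ≥ 1 and q ≥ 2. There exists a constant c(q) > 0, depending only on q, such that for all x, y ∈ ℝⁿ, |y|^q ≥ |x|^q + q|x|^{q−2} x·(y−x) + c(q)|y−x|^q, where |x|^{q−2}x is interpreted as 0 when x = 0. -/
open RealInnerProductSpace

/-- Scalar convexity gradient inequality for `t ↦ t^q`, `q ≥ 1`, via Bernoulli. -/
private lemma bern_aux (q : ℝ) (hq : 1 ≤ q) {s t : ℝ} (hs : 0 < s) (ht : 0 ≤ t) :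
    s ^ q + q * s ^ (q - 1) * (t - s) ≤ t ^ q := by
  have hds : 0 ≤ t / s := div_nonneg ht hs.le
  have h1 : (1 : ℝ) + q * (t / s - 1) ≤ (1 + (t / s - 1)) ^ q :=
    one_add_mul_self_le_rpow_one_add (by linarith) hq
  have h2 : (1 : ℝ) + (t / s - 1) = t / s := by ring
  rw [h2] at h1
  have h3 : (t / s) ^ q = t ^ q / s ^ q := Real.div_rpow ht hs.le q
  have hsq : 0 < s ^ q := Real.rpow_pos_of_pos hs q
  have hkey : s ^ (q - 1) = s ^ q / s := by
    rw [Real.rpow_sub hs, Real.rpow_one]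
  calc s ^ q + q * s ^ (q - 1) * (t - s)
      = s ^ q * (1 + q * (t / s - 1)) := by
        rw [hkey]; field_simp
    _ ≤ s ^ q * ((t / s) ^ q) := by
        exact mul_le_mul_of_nonneg_left h1 hsq.le
    _ = t ^ q := by
        rw [h3]; field_simp

/-- Gradient inequality (plain convexity) for `x ↦ ‖x‖^q` in a real inner product space. -/
private lemma grad_aux {E : Type*} [NormedAddCommGroup E] [InnerProductSpace ℝ E]
    (q : ℝ) (hq : 2 ≤ q) (x m : E) :
    ‖x‖ ^ q + q * ‖x‖ ^ (q - 2) * ⟪x, m - x⟫ ≤ ‖m‖ ^ q := by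
  rcases eq_or_ne x 0 with rfl | hx
  · have h0 : (0 : ℝ) ^ q = 0 := Real.zero_rpow (by positivity)
    simp only [norm_zero, inner_zero_left, mul_zero, h0, zero_add]
    exact Real.rpow_nonneg (norm_nonneg m) q
  · have hx0 : 0 < ‖x‖ := norm_pos_iff.mpr hx
    have hq0 : (0 : ℝ) ≤ q := by linarith
    have hinner : ⟪x, m - x⟫ ≤ ‖x‖ * ‖m‖ - ‖x‖ * ‖x‖ := by
      have h1 : ⟪x, m - x⟫ = ⟪x, m⟫ - ⟪x, x⟫ := inner_sub_right x m x
      have h2 : ⟪x, m⟫ ≤ ‖x‖ * ‖m‖ := real_inner_le_norm x m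
      have h3 : ⟪x, x⟫ = ‖x‖ * ‖x‖ := real_inner_self_eq_norm_mul_norm x
      linarith
    have e1 : ‖x‖ ^ (q - 2) * ‖x‖ = ‖x‖ ^ (q - 1) := by
      rw [show q - 1 = (q - 2) + 1 by ring, Real.rpow_add_one hx0.ne']
    have e2 : ‖x‖ ^ (q - 1) * ‖x‖ = ‖x‖ ^ q := by
      rw [← Real.rpow_add_one hx0.ne' (q - 1)]; congr 1; ring
    have hpw : (0 : ℝ) ≤ ‖x‖ ^ (q - 2) := Real.rpow_nonneg (norm_nonneg x) _
    have step : q * ‖x‖ ^ (q - 2) * ⟪x, m - x⟫ ≤ q * ‖x‖ ^ (q - 1) * (‖m‖ - ‖x‖) := by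
      have := mul_le_mul_of_nonneg_left hinner (mul_nonneg hq0 hpw)
      calc q * ‖x‖ ^ (q - 2) * ⟪x, m - x⟫
          = q * ‖x‖ ^ (q - 2) * ⟪x, m - x⟫ := rfl
        _ ≤ q * ‖x‖ ^ (q - 2) * (‖x‖ * ‖m‖ - ‖x‖ * ‖x‖) := by
            rw [mul_assoc] at this ⊢; exact this
        _ = q * (‖x‖ ^ (q - 2) * ‖x‖) * (‖m‖ - ‖x‖) := by ring
        _ = q * ‖x‖ ^ (q - 1) * (‖m‖ - ‖x‖) := by rw [e1]
    have hb := bern_aux q (by linarith) hx0 (norm_nonneg m)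
    linarith
  
/-- Superadditivity of `rpow` for exponents `≥ 1` on nonnegative reals. -/
private lemma superadd_aux {p : ℝ} (hp : 1 ≤ p) {a b : ℝ} (ha : 0 ≤ a) (hb : 0 ≤ b) :
    a ^ p + b ^ p ≤ (a + b) ^ p := by
  have h := NNReal.add_rpow_le_rpow_add a.toNNReal b.toNNReal hp
  have h' := (NNReal.coe_le_coe).2 h
  rw [NNReal.coe_add, NNReal.coe_rpow, NNReal.coe_rpow, NNReal.coe_rpow, NNReal.coe_add,
    Real.coe_toNNReal a ha, Real.coe_toNNReal b hb] at h'
  exact h'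

/-- `(c^2)^(q/2) = c^q` for `c ≥ 0`. -/
private lemma sq_rpow_aux {c : ℝ} (hc : 0 ≤ c) (q : ℝ) : (c ^ 2) ^ (q / 2) = c ^ q := by
  rw [← Real.rpow_natCast c 2, ← Real.rpow_mul hc]
  congr 1
  push_cast
  ring

/-- Clarkson-type inequality in a real inner product space, `q ≥ 2`. -/
private lemma clarkson_aux {E : Type*} [NormedAddCommGroup E] [InnerProductSpace ℝ E]
    (q : ℝ) (hq : 2 ≤ q) (x y : E) :
    ‖(1/2 : ℝ) • (x + y)‖ ^ q + ‖(1/2 : ℝ) • (y - x)‖ ^ q ≤ (‖x‖ ^ q + ‖y‖ ^ q) / 2 := by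
  set a := ‖(1/2 : ℝ) • (x + y)‖ with ha
  set b := ‖(1/2 : ℝ) • (y - x)‖ with hb
  have ha0 : 0 ≤ a := norm_nonneg _
  have hb0 : 0 ≤ b := norm_nonneg _
  have hp : 1 ≤ q / 2 := by linarith
  -- parallelogram identity
  have hpar : a ^ 2 + b ^ 2 = (‖x‖ ^ 2 + ‖y‖ ^ 2) / 2 := by
    have h := parallelogram_law_with_norm ℝ x y
    have hxy : ‖x - y‖ = ‖y - x‖ := norm_sub_rev x y
    have h1 : a = (1/2 : ℝ) * ‖x + y‖ := by
      rw [ha, norm_smul]; simp [abs_of_nonneg]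
    have h2 : b = (1/2 : ℝ) * ‖y - x‖ := by
      rw [hb, norm_smul]; simp [abs_of_nonneg]
    rw [h1, h2, ← hxy]
    nlinarith [h]
  -- superadditivity step
  have hsup : a ^ q + b ^ q ≤ (a ^ 2 + b ^ 2) ^ (q / 2) := by
    have := superadd_aux hp (by positivity : (0:ℝ) ≤ a ^ 2) (by positivity : (0:ℝ) ≤ b ^ 2)
    rwa [sq_rpow_aux ha0, sq_rpow_aux hb0] at this
  -- midpoint convexity of rpow
  have hconv : ((‖x‖ ^ 2 + ‖y‖ ^ 2) / 2) ^ (q / 2)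
      ≤ ((‖x‖ ^ 2) ^ (q / 2) + (‖y‖ ^ 2) ^ (q / 2)) / 2 := by
    have hcv := (convexOn_rpow hp).2 (Set.mem_Ici.mpr (by positivity : (0:ℝ) ≤ ‖x‖ ^ 2))
      (Set.mem_Ici.mpr (by positivity : (0:ℝ) ≤ ‖y‖ ^ 2))
      (by norm_num : (0:ℝ) ≤ (1/2 : ℝ)) (by norm_num : (0:ℝ) ≤ (1/2 : ℝ))
      (by norm_num : (1/2 : ℝ) + 1/2 = 1)
    simp only [smul_eq_mul] at hcv
    calc ((‖x‖ ^ 2 + ‖y‖ ^ 2) / 2) ^ (q / 2)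
        = ((1/2 : ℝ) * ‖x‖ ^ 2 + (1/2 : ℝ) * ‖y‖ ^ 2) ^ (q / 2) := by ring_nf
      _ ≤ (1/2 : ℝ) * (‖x‖ ^ 2) ^ (q / 2) + (1/2 : ℝ) * (‖y‖ ^ 2) ^ (q / 2) := hcv
      _ = ((‖x‖ ^ 2) ^ (q / 2) + (‖y‖ ^ 2) ^ (q / 2)) / 2 := by ring
  rw [sq_rpow_aux (norm_nonneg x), sq_rpow_aux (norm_nonneg y)] at hconv
  calc a ^ q + b ^ q ≤ (a ^ 2 + b ^ 2) ^ (q / 2) := hsup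
    _ = ((‖x‖ ^ 2 + ‖y‖ ^ 2) / 2) ^ (q / 2) := by rw [hpar]
    _ ≤ (‖x‖ ^ q + ‖y‖ ^ q) / 2 := hconv

/-- **Sharpened convexity of the `q`-power function, `q ≥ 2`** (Proposition 3.2, case `q ≥ 2`).
There is a constant `c(q) > 0` depending only on `q` such that for all `x, y ∈ ℝⁿ`,
`|y|^q ≥ |x|^q + q|x|^{q-2} x·(y-x) + c(q)|y-x|^q`. -/
theorem sharpened_convexity_q_ge_two (q : ℝ) (hq : 2 ≤ q) :
    ∃ c : ℝ, 0 < c ∧ ∀ (n : ℕ), 1 ≤ n → ∀ x y : EuclideanSpace ℝ (Fin n),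
      ‖y‖ ^ q ≥ ‖x‖ ^ q + q * ‖x‖ ^ (q - 2) * ⟪x, y - x⟫ + c * ‖y - x‖ ^ q := by
  refine ⟨2 * (1/2 : ℝ) ^ q, by positivity, fun n _ x y => ?_⟩
  set m : EuclideanSpace ℝ (Fin n) := (1/2 : ℝ) • (x + y) with hmdef
  have hm : m - x = (1/2 : ℝ) • (y - x) := by
    rw [hmdef]; module
  have G := grad_aux q hq x m
  rw [hm, real_inner_smul_right] at G
  have C := clarkson_aux q hq x y
  rw [← hmdef] at C
  have hns : ‖(1/2 : ℝ) • (y - x)‖ ^ q = (1/2 : ℝ) ^ q * ‖y - x‖ ^ q := by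
    rw [norm_smul, Real.norm_eq_abs, abs_of_nonneg (by norm_num : (0:ℝ) ≤ (1/2:ℝ)),
      Real.mul_rpow (by norm_num) (norm_nonneg _)]
  rw [hns] at C
  have hG2 := mul_le_mul_of_nonneg_left G (by norm_num : (0:ℝ) ≤ 2)
  ring_nf at hG2 C ⊢
  linarith
end

section
/- Let n ≥ 1 and 1 < q < 2. For all x, y ∈ ℝⁿ, |y|^q ≥ |x|^q + q|x|^{q−2} x·(y−x) + (q(q−1)/2) |y−x|² (1 + |x| + |y|)^{q−2}, where |x|^{q−2}x is interpreted as 0 when x = 0. -/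
/-!
Put `a = ‖x‖`, `b = ‖y‖`, `M = 1 + a + b`. Since `q ≤ 2`, `t^{q-2} ≥ M^{q-2}` on `(0, M)`, so
`t ↦ t^q - q(q-1)/2 M^{q-2} t²` is convex on `[0, M]`, and its tangent line at `a`, evaluated at
`b`, is the inequality for positively parallel `x` and `y`. In general both sides depend on `x`
and `y` only through `a`, `b` and `⟪x, y⟫ ≤ ab`, and the right-hand side is affine in `⟪x, y⟫`
with slope `q a^{q-2} - q(q-1) M^{q-2} ≥ 0`, so the parallel case is the worst one.
-/

open RealInnerProductSpace Set

lemma ConvexOn.add_mul_sub_le_of_hasDerivAt {S : Set ℝ} {f : ℝ → ℝ} {x y f' : ℝ}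
    (hf : ConvexOn ℝ S f) (hx : x ∈ S) (hy : y ∈ S) (hfx : HasDerivAt f f' x) :
    f x + f' * (y - x) ≤ f y := by
  rcases lt_trichotomy x y with hxy | rfl | hxy
  · have hslope := hf.le_slope_of_hasDerivAt hx hy hxy hfx
    rw [slope_def_field, le_div_iff₀ (sub_pos.2 hxy)] at hslope
    linarith
  · simp
  · have hslope := hf.slope_le_of_hasDerivAt hy hx hxy hfx
    rw [slope_def_field, div_le_iff₀ (sub_pos.2 hxy)] at hslope
    linarith

section RpowSubSq

variable {q M : ℝ}

lemma hasDerivAt_rpow_sub_mul_sq (k : ℝ) {t : ℝ} (hq : 1 ≤ q) :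
    HasDerivAt (fun s : ℝ => s ^ q - k * s ^ 2) (q * t ^ (q - 1) - 2 * k * t) t := by
  refine ((Real.hasDerivAt_rpow_const (Or.inr hq)).sub
    ((hasDerivAt_pow 2 t).const_mul k)).congr_deriv ?_
  push_cast
  ring

lemma convexOn_rpow_sub_mul_sq (hq1 : 1 ≤ q) (hq2 : q ≤ 2) :
    ConvexOn ℝ (Icc 0 M) (fun t : ℝ => t ^ q - q * (q - 1) / 2 * M ^ (q - 2) * t ^ 2) := by
  set k := q * (q - 1) / 2 * M ^ (q - 2)
  refine convexOn_of_hasDerivWithinAt2_nonneg (convex_Icc 0 M)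
    (f' := fun t => q * t ^ (q - 1) - 2 * k * t)
    (f'' := fun t => q * (q - 1) * t ^ (q - 2) - 2 * k) ?_ ?_ ?_ ?_
  · exact ((Real.continuous_rpow_const (by linarith)).sub (continuous_const.mul
      (continuous_pow 2))).continuousOn
  · exact fun t _ => (hasDerivAt_rpow_sub_mul_sq k hq1).hasDerivWithinAt
  · rw [interior_Icc]
    intro t ht
    have hderiv := ((Real.hasDerivAt_rpow_const (p := q - 1) (Or.inl ht.1.ne')).const_mul q).sub
      ((hasDerivAt_id t).const_mul (2 * k))
    refine (hderiv.congr_deriv ?_).hasDerivWithinAt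
    ring_nf
  · rw [interior_Icc]
    intro t ht
    have hpow : M ^ (q - 2) ≤ t ^ (q - 2) :=
      Real.rpow_le_rpow_of_nonpos ht.1 ht.2.le (by linarith)
    have hqq : 0 ≤ q * (q - 1) := by nlinarith
    have hscaled := mul_le_mul_of_nonneg_left hpow hqq
    simp only [k]
    linarith

lemma rpow_add_mul_sub_add_sq_le {a b : ℝ} (hq1 : 1 ≤ q) (hq2 : q ≤ 2) (ha : 0 ≤ a)
    (hb : 0 ≤ b) (haM : a ≤ M) (hbM : b ≤ M) :
    a ^ q + q * a ^ (q - 1) * (b - a) + q * (q - 1) / 2 * M ^ (q - 2) * (b - a) ^ 2 ≤ b ^ q := by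
  have htangent := (convexOn_rpow_sub_mul_sq hq1 hq2).add_mul_sub_le_of_hasDerivAt
    ⟨ha, haM⟩ ⟨hb, hbM⟩ (hasDerivAt_rpow_sub_mul_sq (q * (q - 1) / 2 * M ^ (q - 2)) hq1)
  linear_combination htangent

end RpowSubSq

theorem norm_rpow_add_inner_add_sq_le {E : Type*} [NormedAddCommGroup E] [InnerProductSpace ℝ E]
    {q M : ℝ} (hq1 : 1 < q) (hq2 : q ≤ 2) {x y : E} (hx : ‖x‖ ≤ M) (hy : ‖y‖ ≤ M) :
    ‖x‖ ^ q + q * ‖x‖ ^ (q - 2) * ⟪x, y - x⟫ + q * (q - 1) / 2 * M ^ (q - 2) * ‖y - x‖ ^ 2 ≤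
      ‖y‖ ^ q := by
  have hscalar := rpow_add_mul_sub_add_sq_le hq1.le hq2 (norm_nonneg x) (norm_nonneg y) hx hy
  have hpow : ‖x‖ ^ (q - 1) = ‖x‖ ^ (q - 2) * ‖x‖ := by
    rw [← Real.rpow_add_one' (norm_nonneg x) (by linarith)]
    ring_nf
  have hinner : ⟪x, y - x⟫ = ⟪x, y⟫ - ‖x‖ ^ 2 := by
    rw [inner_sub_right, real_inner_self_eq_norm_sq]
  have hnorm : ‖y - x‖ ^ 2 = ‖y‖ ^ 2 - 2 * ⟪x, y⟫ + ‖x‖ ^ 2 := by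
    rw [norm_sub_sq_real, real_inner_comm]
  have hslope : q * (q - 1) * M ^ (q - 2) * (‖x‖ * ‖y‖ - ⟪x, y⟫) ≤
      q * ‖x‖ ^ (q - 2) * (‖x‖ * ‖y‖ - ⟪x, y⟫) := by
    rcases (norm_nonneg x).eq_or_lt with hx0 | hxpos
    · simp [norm_eq_zero.1 hx0.symm]
    refine mul_le_mul_of_nonneg_right ?_ (sub_nonneg.2 (real_inner_le_norm x y))
    have hMpow : M ^ (q - 2) ≤ ‖x‖ ^ (q - 2) :=
      Real.rpow_le_rpow_of_nonpos hxpos hx (by linarith)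
    calc q * (q - 1) * M ^ (q - 2) ≤ q * 1 * M ^ (q - 2) := by
          gcongr
          · exact Real.rpow_nonneg (hxpos.le.trans hx) _
          · linarith
      _ ≤ q * ‖x‖ ^ (q - 2) := by linarith [mul_le_mul_of_nonneg_left hMpow (by linarith : 0 ≤ q)]
  rw [hinner, hnorm]
  rw [hpow] at hscalar
  linear_combination hscalar + hslope

theorem sharpened_convexity_q_lt_two_general (q : ℝ) (hq1 : 1 < q) (hq2 : q < 2)
    (n : ℕ) (x y : EuclideanSpace ℝ (Fin n)) :
    ‖y‖ ^ q ≥ ‖x‖ ^ q + q * ‖x‖ ^ (q - 2) * ⟪x, y - x⟫ +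
      q * (q - 1) / 2 * ‖y - x‖ ^ 2 * (1 + ‖x‖ + ‖y‖) ^ (q - 2) := by
  have hx : ‖x‖ ≤ 1 + ‖x‖ + ‖y‖ := by linarith [norm_nonneg y]
  have hy : ‖y‖ ≤ 1 + ‖x‖ + ‖y‖ := by linarith [norm_nonneg x]
  linear_combination norm_rpow_add_inner_add_sq_le hq1 hq2.le hx hy

/-- **Sharpened convexity of the `q`-power function, `1 < q < 2`** (Proposition 3.2,
case `1 < q < 2`, with explicit constant `c(q) = q(q-1)/2`): for all `x, y ∈ ℝⁿ`,
`|y|^q ≥ |x|^q + q|x|^{q-2} x·(y-x) + (q(q-1)/2)|y-x|²(1+|x|+|y|)^{q-2}`. -/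
theorem sharpened_convexity_q_lt_two (q : ℝ) (hq1 : 1 < q) (hq2 : q < 2)
    (n : ℕ) (hn : 1 ≤ n) (x y : EuclideanSpace ℝ (Fin n)) :
    ‖y‖ ^ q ≥ ‖x‖ ^ q + q * ‖x‖ ^ (q - 2) * ⟪x, y - x⟫ +
      q * (q - 1) / 2 * ‖y - x‖ ^ 2 * (1 + ‖x‖ + ‖y‖) ^ (q - 2) :=
  sharpened_convexity_q_lt_two_general q hq1 hq2 n x y
end

section
/- Let n ≥ 1. For all x, y ∈ ℝⁿ with x ≠ 0, |y| ln(1+|y|) ≥ |x| ln(1+|x|) + ( ln(1+|x|) + |x|/(1+|x|) ) (x/|x|)·(y−x) + |y−x|² / ( 2(1+|x|+|y|) ). -/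
/-!
Write `a = |x|`, `b = |y|` and `e = x / |x|`. Since `|y - x|² = (b - a)² + 2a (b - e·y)` with
`b - e·y ≥ 0`, and the coefficient `a / (1 + a + b)` of this angular part is at most the slope
`ln(1 + a) + a / (1 + a)`, the claim reduces to the one-dimensional inequality for `a, b ≥ 0`.
There `f(s) = s ln(1 + s)` has `f''(s) = 1/(1 + s) + 1/(1 + s)² ≥ 1/(1 + a + b)` on `[0, a + b]`,
so `f` is `(1 + a + b)⁻¹`-strongly convex there, and the tangent-line inequality for strongly
convex functions gives the quadratic term.
-/

open Real Set RealInnerProductSpace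

theorem ConvexOn.add_deriv_mul_sub_le {S : Set ℝ} {f : ℝ → ℝ} {f' x y : ℝ}
    (hf : ConvexOn ℝ S f) (hx : x ∈ S) (hy : y ∈ S) (hfx : HasDerivAt f f' x) :
    f x + f' * (y - x) ≤ f y := by
  rcases lt_trichotomy x y with hxy | rfl | hxy
  · have := hf.le_slope_of_hasDerivAt hx hy hxy hfx
    rw [slope_def_field, le_div_iff₀ (sub_pos.2 hxy)] at this
    linarith
  · simp
  · have := hf.slope_le_of_hasDerivAt hy hx hxy hfx
    rw [slope_def_field, div_le_iff₀ (sub_pos.2 hxy)] at this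
    linarith

theorem StrongConvexOn.add_deriv_mul_sub_add_sq_le {S : Set ℝ} {f : ℝ → ℝ} {m f' x y : ℝ}
    (hf : StrongConvexOn S m f) (hx : x ∈ S) (hy : y ∈ S) (hfx : HasDerivAt f f' x) :
    f x + f' * (y - x) + m / 2 * (y - x) ^ 2 ≤ f y := by
  rw [strongConvexOn_iff_convex] at hf
  simp only [Real.norm_eq_abs, sq_abs] at hf
  have hg : HasDerivAt (fun s ↦ f s - m / 2 * s ^ 2) (f' - m * x) x :=
    (hfx.sub ((hasDerivAt_pow 2 x).const_mul (m / 2))).congr_deriv (by push_cast; ring)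
  linear_combination hf.add_deriv_mul_sub_le hx hy hg

theorem hasDerivAt_mul_log_one_add {x : ℝ} (hx : -1 < x) :
    HasDerivAt (fun s ↦ s * log (1 + s)) (log (1 + x) + x / (1 + x)) x := by
  have h : 1 + x ≠ 0 := by linarith
  exact ((hasDerivAt_id' x).mul (((hasDerivAt_id' x).const_add 1).log h)).congr_deriv (by ring)

theorem hasDerivAt_log_one_add_add_div_one_add {x : ℝ} (hx : -1 < x) :
    HasDerivAt (fun s ↦ log (1 + s) + s / (1 + s)) (1 / (1 + x) + 1 / (1 + x) ^ 2) x := by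
  have h : 1 + x ≠ 0 := by linarith
  exact ((((hasDerivAt_id' x).const_add 1).log h).add
    ((hasDerivAt_id' x).div ((hasDerivAt_id' x).const_add 1) h)).congr_deriv (by field_simp; ring)

theorem strongConvexOn_mul_log_one_add {c : ℝ} :
    StrongConvexOn (Icc 0 c) (1 + c)⁻¹ (fun s ↦ s * log (1 + s)) := by
  rw [strongConvexOn_iff_convex]
  simp only [Real.norm_eq_abs, sq_abs]
  refine convexOn_of_hasDerivWithinAt2_nonneg (convex_Icc 0 c)
    (f' := fun s ↦ log (1 + s) + s / (1 + s) - (1 + c)⁻¹ * s)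
    (f'' := fun s ↦ 1 / (1 + s) + 1 / (1 + s) ^ 2 - (1 + c)⁻¹) ?_ ?_ ?_ ?_
  · intro s hs
    exact ((hasDerivAt_mul_log_one_add (by linarith [hs.1])).sub
      ((hasDerivAt_pow 2 s).const_mul _)).continuousAt.continuousWithinAt
  · rw [interior_Icc]
    rintro s ⟨hs0, -⟩
    exact ((hasDerivAt_mul_log_one_add (by linarith)).sub ((hasDerivAt_pow 2 s).const_mul _)
      |>.congr_deriv (by push_cast; ring)).hasDerivWithinAt
  · rw [interior_Icc]
    rintro s ⟨hs0, -⟩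
    exact ((hasDerivAt_log_one_add_add_div_one_add (by linarith)).sub
      ((hasDerivAt_id' s).const_mul _) |>.congr_deriv (by ring)).hasDerivWithinAt
  · rw [interior_Icc]
    rintro s ⟨hs0, hsc⟩
    have : (1 + c)⁻¹ ≤ 1 / (1 + s) := by
      rw [one_div]; gcongr
    have : 0 ≤ 1 / (1 + s) ^ 2 := by positivity
    linarith

theorem tangent_add_sq_div_le_mul_log_one_add {a b : ℝ} (ha : 0 ≤ a) (hb : 0 ≤ b) :
    a * log (1 + a) + (log (1 + a) + a / (1 + a)) * (b - a) + (b - a) ^ 2 / (2 * (1 + a + b))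
      ≤ b * log (1 + b) := by
  have key := (strongConvexOn_mul_log_one_add (c := a + b)).add_deriv_mul_sub_add_sq_le
    ⟨ha, by linarith⟩ ⟨hb, by linarith⟩ (hasDerivAt_mul_log_one_add (by linarith))
  convert key using 2
  field_simp
  ring

theorem norm_sub_sq_eq_sq_norm_sub_norm_add {E : Type*} [NormedAddCommGroup E]
    [InnerProductSpace ℝ E] (x y : E) :
    ‖y - x‖ ^ 2 = (‖y‖ - ‖x‖) ^ 2 + 2 * ‖x‖ * (‖y‖ - ⟪‖x‖⁻¹ • x, y⟫) := by
  rcases eq_or_ne x 0 with rfl | hx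
  · simp
  rw [norm_sub_sq_real, real_inner_smul_left, real_inner_comm]
  field_simp
  ring

theorem sharpened_convexity_log_general (n : ℕ)
    (x y : EuclideanSpace ℝ (Fin n)) (hx : x ≠ 0) :
    ‖y‖ * Real.log (1 + ‖y‖) ≥ ‖x‖ * Real.log (1 + ‖x‖) +
      (Real.log (1 + ‖x‖) + ‖x‖ / (1 + ‖x‖)) * ⟪‖x‖⁻¹ • x, y - x⟫ +
      ‖y - x‖ ^ 2 / (2 * (1 + ‖x‖ + ‖y‖)) := by
  have hx0 : 0 < ‖x‖ := norm_pos_iff.2 hx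
  have hy0 : 0 ≤ ‖y‖ := norm_nonneg y
  have he_x : ⟪‖x‖⁻¹ • x, x⟫ = ‖x‖ := by
    rw [real_inner_smul_left, real_inner_self_eq_norm_sq]
    field_simp
  have he_y : ⟪‖x‖⁻¹ • x, y⟫ ≤ ‖y‖ := by
    simpa [norm_smul, hx0.ne'] using real_inner_le_norm (‖x‖⁻¹ • x) y
  set K := log (1 + ‖x‖) + ‖x‖ / (1 + ‖x‖)
  have hK : ‖x‖ / (1 + ‖x‖ + ‖y‖) ≤ K := by
    have : ‖x‖ / (1 + ‖x‖ + ‖y‖) ≤ ‖x‖ / (1 + ‖x‖) :=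
      div_le_div_of_nonneg_left hx0.le (by positivity) (by linarith)
    linarith [log_nonneg (by linarith : 1 ≤ 1 + ‖x‖)]
  rw [inner_sub_right, he_x, norm_sub_sq_eq_sq_norm_sub_norm_add, ge_iff_le]
  calc _ = ‖x‖ * log (1 + ‖x‖) + K * (‖y‖ - ‖x‖) + (‖y‖ - ‖x‖) ^ 2 / (2 * (1 + ‖x‖ + ‖y‖))
          - (‖y‖ - ⟪‖x‖⁻¹ • x, y⟫) * (K - ‖x‖ / (1 + ‖x‖ + ‖y‖)) := by
        field_simp
        ring
    _ ≤ ‖x‖ * log (1 + ‖x‖) + K * (‖y‖ - ‖x‖) + (‖y‖ - ‖x‖) ^ 2 / (2 * (1 + ‖x‖ + ‖y‖)) := by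
        linarith [mul_nonneg (sub_nonneg.2 he_y) (sub_nonneg.2 hK)]
    _ ≤ _ := tangent_add_sq_div_le_mul_log_one_add hx0.le hy0

/-- **Sharpened convexity of `p ↦ |p| ln(1+|p|)`** (Remark 3.3): for all `x ≠ 0` and `y` in `ℝⁿ`,
`|y|ln(1+|y|) ≥ |x|ln(1+|x|) + (ln(1+|x|) + |x|/(1+|x|)) (x/|x|)·(y-x) + |y-x|²/(2(1+|x|+|y|))`. -/
theorem sharpened_convexity_log (n : ℕ) (hn : 1 ≤ n)
    (x y : EuclideanSpace ℝ (Fin n)) (hx : x ≠ 0) :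
    ‖y‖ * Real.log (1 + ‖y‖) ≥ ‖x‖ * Real.log (1 + ‖x‖) +
      (Real.log (1 + ‖x‖) + ‖x‖ / (1 + ‖x‖)) * ⟪‖x‖⁻¹ • x, y - x⟫ +
      ‖y - x‖ ^ 2 / (2 * (1 + ‖x‖ + ‖y‖)) :=
  sharpened_convexity_log_general n x y hx
end

section
/- Let n ≥ 1 and q ≥ 2. There exists a constant c₀ > 0, depending only on q, such that for every x ∈ ℝⁿ and every unit vector e ∈ ℝⁿ, ∫₀¹ |x + t e|^{q−2} (1−t) dt ≥ c₀. -/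
open MeasureTheory

/-!
Writing `s = ⟪x, e⟫`, Cauchy–Schwarz against the unit vector `e` gives
`‖x + t • e‖ ≥ |s + t|`. Whatever `s` is, one of the intervals `[0, 1/8]` (if `s < -3/8`)
or `[5/8, 3/4]` (otherwise) keeps `|s + t|` and `1 - t` above `1/4`, so the integrand is at
least `(1/4) ^ (q - 2) / 4` on an interval of length `1/8`.
-/

open scoped RealInnerProductSpace

lemma abs_inner_add_le_norm_add_smul {E : Type*} [NormedAddCommGroup E] [InnerProductSpace ℝ E]
    {e : E} (he : ‖e‖ = 1) (x : E) (t : ℝ) : |⟪x, e⟫ + t| ≤ ‖x + t • e‖ := by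
  have h := abs_real_inner_le_norm (x + t • e) e
  rwa [inner_add_left, real_inner_smul_left, real_inner_self_eq_norm_sq, he, one_pow, mul_one,
    mul_one] at h

lemma exists_quarter_le_abs_add_on_Icc (s : ℝ) :
    ∃ a ∈ Set.Icc (0 : ℝ) (5 / 8), ∀ t ∈ Set.Icc a (a + 1 / 8), 1 / 4 ≤ |s + t| := by
  by_cases hs : -3 / 8 ≤ s
  · refine ⟨5 / 8, by norm_num, fun t ht => ?_⟩
    rw [abs_of_nonneg (by linarith [ht.1])]
    linarith [ht.1]
  · refine ⟨0, by norm_num, fun t ht => ?_⟩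
    rw [abs_of_neg (by linarith [ht.2])]
    linarith [ht.2]

lemma mul_le_integral_of_le_on_Icc {f : ℝ → ℝ} {a b c d m : ℝ}
    (hf : IntervalIntegrable f volume c d)
    (hf_nonneg : ∀ t ∈ Set.Icc c d, 0 ≤ f t) (hca : c ≤ a) (hab : a ≤ b) (hbd : b ≤ d)
    (hm : ∀ t ∈ Set.Icc a b, m ≤ f t) : (b - a) * m ≤ ∫ t in c..d, f t := by
  have hf_ab : IntervalIntegrable f volume a b :=
    hf.mono_set (Set.uIcc_subset_uIcc (Set.mem_uIcc_of_le hca (hab.trans hbd))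
      (Set.mem_uIcc_of_le (hca.trans hab) hbd))
  have hf_ae : 0 ≤ᵐ[volume.restrict (Set.Ioc c d)] f :=
    ae_restrict_of_forall_mem measurableSet_Ioc fun t ht =>
      hf_nonneg t (Set.Ioc_subset_Icc_self ht)
  calc (b - a) * m = ∫ _ in a..b, m := by rw [intervalIntegral.integral_const, smul_eq_mul]
    _ ≤ ∫ t in a..b, f t :=
      intervalIntegral.integral_mono_on hab intervalIntegrable_const hf_ab hm
    _ ≤ ∫ t in c..d, f t := intervalIntegral.integral_mono_interval hca hab hbd hf_ae hf

/-- **Uniform lower bound on the key integral** (inequality (3.5)): for `q ≥ 2` there is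
`c₀ > 0`, depending only on `q`, such that for every `x ∈ ℝⁿ` and every unit vector `e`,
`∫₀¹ |x + t e|^{q-2} (1-t) dt ≥ c₀`. -/
theorem integral_lower_bound (q : ℝ) (hq : 2 ≤ q) :
    ∃ c₀ : ℝ, 0 < c₀ ∧ ∀ (n : ℕ), 1 ≤ n → ∀ x e : EuclideanSpace ℝ (Fin n), ‖e‖ = 1 →
      c₀ ≤ ∫ t in (0:ℝ)..1, ‖x + t • e‖ ^ (q - 2) * (1 - t) := by
  have hq2 : 0 ≤ q - 2 := by linarith
  refine ⟨1 / 8 * ((1 / 4) ^ (q - 2) * (1 / 4)), by positivity, fun n _ x e he => ?_⟩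
  obtain ⟨a, ha, h_abs⟩ := exists_quarter_le_abs_add_on_Icc ⟪x, e⟫
  have hcont : Continuous fun t : ℝ => ‖x + t • e‖ ^ (q - 2) * (1 - t) := by
    fun_prop (disch := exact fun _ => Or.inr hq2)
  have h_lower : ∀ t ∈ Set.Icc a (a + 1 / 8),
      (1 / 4) ^ (q - 2) * (1 / 4) ≤ ‖x + t • e‖ ^ (q - 2) * (1 - t) := fun t ht =>
    mul_le_mul
      (Real.rpow_le_rpow (by norm_num)
        ((h_abs t ht).trans (abs_inner_add_le_norm_add_smul he x t)) hq2)
      (by linarith [ht.2, ha.2]) (by norm_num) (Real.rpow_nonneg (norm_nonneg _) _)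
  have h := mul_le_integral_of_le_on_Icc (hcont.intervalIntegrable 0 1)
    (fun t ht => mul_nonneg (Real.rpow_nonneg (norm_nonneg _) _) (by linarith [ht.2]))
    ha.1 (by linarith) (by linarith [ha.2]) h_lower
  rwa [add_sub_cancel_left] at h
end

section
/- Let n ≥ 1 and let Z ⊂ ℝⁿ be an open convex set satisfying B_r(x̄) ⊆ Z ⊆ B_R(x̄) for some 0 < r ≤ R and x̄ ∈ ℝⁿ. Let u : Z → ℝ be convex and K-Lipschitz, and suppose there exist constants C, ϱ > 0 and α ∈ (0,1] such that for every x ∈ Z there exists a subgradient p_x ∈ ∂u(x) with u(z) − u(x) − p_x·(z−x) ≤ C|z−x|^{1+α} for all z ∈ Z ∩ B_ϱ(x). Then u is differentiable at every point of Z and its gradient ∇u is α-Hölder continuous on Z, with Hölder constant bounded by a quantity C̄ depending only on r, R, K, C, ϱ (and α, n). -/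
open RealInnerProductSpace Metric

/-- The subdifferential of `u` at `x`, relative to the set `Z`. -/
def subgrad {n : ℕ} (Z : Set (EuclideanSpace ℝ (Fin n)))
    (u : EuclideanSpace ℝ (Fin n) → ℝ) (x : EuclideanSpace ℝ (Fin n)) :
    Set (EuclideanSpace ℝ (Fin n)) :=
  {p | ∀ z ∈ Z, u x + ⟪p, z - x⟫ ≤ u z}

open Asymptotics Filter Topology Pointwise

/-! Near `x`, `u` is squeezed between its supporting plane with slope `p_x` and that plane plus
`C |z - x|^(1+α)`, so `u` is differentiable at `x` with gradient `p_x`. Testing the supporting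
plane at `x` and the upper bound at `y` at the point `z = y + τ (p_x - p_y)/|p_x - p_y|` gives
`τ |p_x - p_y| ≤ C |x - y|^(1+α) + C τ^(1+α)`, provided `B_τ(y) ⊆ Z`. Near the boundary of `Z`
such balls are found by pulling `x` and `y` towards `x̄` by the factor `|x - y| / r`: this moves
them by at most `(R / r) |x - y|` and, by convexity, frees a ball of radius `|x - y|` around them.
At distances that are not small, the Lipschitz bound `|∇u| ≤ K` suffices. -/

lemma norm_sub_le_mul_rpow_of_local_of_bounded {X F : Type*} [SeminormedAddCommGroup X]
    [SeminormedAddCommGroup F] {S : Set X} {g : X → F} {A B δ α : ℝ}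
    (hA : 0 ≤ A) (hδ : 0 < δ) (hα : 0 ≤ α) (hB : ∀ x ∈ S, ‖g x‖ ≤ B)
    (hloc : ∀ x ∈ S, ∀ y ∈ S, ‖x - y‖ < δ → ‖g x - g y‖ ≤ A * ‖x - y‖ ^ α)
    {x y : X} (hx : x ∈ S) (hy : y ∈ S) :
    ‖g x - g y‖ ≤ (A + 2 * B / δ ^ α) * ‖x - y‖ ^ α := by
  have hB0 : 0 ≤ B := (norm_nonneg _).trans (hB x hx)
  have hδα : 0 < δ ^ α := Real.rpow_pos_of_pos hδ α
  obtain hnear | hfar := lt_or_ge ‖x - y‖ δ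
  · calc ‖g x - g y‖ ≤ A * ‖x - y‖ ^ α := hloc x hx y hy hnear
      _ ≤ (A + 2 * B / δ ^ α) * ‖x - y‖ ^ α := by
        gcongr; exact le_add_of_nonneg_right (by positivity)
  · calc ‖g x - g y‖ ≤ ‖g x‖ + ‖g y‖ := norm_sub_le _ _
      _ ≤ 2 * B / δ ^ α * δ ^ α := by rw [div_mul_cancel₀ _ hδα.ne']; linarith [hB x hx, hB y hy]
      _ ≤ 2 * B / δ ^ α * ‖x - y‖ ^ α := by gcongr
      _ ≤ (A + 2 * B / δ ^ α) * ‖x - y‖ ^ α := by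
        gcongr; exact le_add_of_nonneg_left hA

lemma isLittleO_norm_sub_rpow_one_add {E : Type*} [SeminormedAddCommGroup E] {x : E} {α : ℝ}
    (hα : 0 < α) :
    (fun z => ‖z - x‖ ^ (1 + α)) =o[𝓝 x] fun z => z - x := by
  have hlim : Tendsto (fun z => ‖z - x‖ ^ α) (𝓝 x) (𝓝 0) := by
    have : ContinuousAt (fun z => ‖z - x‖ ^ α) x := by fun_prop (disch := positivity)
    simpa [Real.zero_rpow hα.ne'] using this.tendsto
  have h := (isLittleO_one_iff (F := ℝ) |>.2 hlim).mul_isBigO (isBigO_refl (fun z => ‖z - x‖) _)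
  refine (isLittleO_norm_right.1 ?_)
  simpa [← Real.rpow_add_one' (norm_nonneg _) (by linarith : α + 1 ≠ 0), add_comm] using h

section InnerProductSpace

variable {E : Type*} [NormedAddCommGroup E] [InnerProductSpace ℝ E]

lemma hasGradientAt_of_le_rpow [CompleteSpace E] {Z : Set E} {u : E → ℝ} {x p : E} {C ϱ α : ℝ}
    (hZ : Z ∈ 𝓝 x) (hϱ : 0 < ϱ) (hα : 0 < α)
    (hlow : ∀ z ∈ Z, u x + ⟪p, z - x⟫ ≤ u z)
    (hup : ∀ z ∈ Z ∩ ball x ϱ, u z - u x - ⟪p, z - x⟫ ≤ C * ‖z - x‖ ^ (1 + α)) :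
    HasGradientAt u p x := by
  refine (hasGradientAt_iff_hasFDerivAt.2 <| HasFDerivAt.of_isLittleO ?_)
  refine IsBigO.trans_isLittleO (IsBigO.of_bound C ?_) (isLittleO_norm_sub_rpow_one_add hα)
  filter_upwards [inter_mem hZ (ball_mem_nhds x hϱ)] with z hz
  have h0 : 0 ≤ u z - u x - ⟪p, z - x⟫ := by linarith [hlow z hz.1]
  rw [InnerProductSpace.toDual_apply_apply, Real.norm_of_nonneg h0,
    Real.norm_of_nonneg (by positivity)]
  exact hup z hz

lemma HasGradientAt.norm_le_of_lipschitzOn [CompleteSpace E] {u : E → ℝ} {x p : E} {s : Set E}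
    {K : NNReal} (hu : HasGradientAt u p x) (hs : s ∈ 𝓝 x) (hlip : LipschitzOnWith K u s) :
    ‖p‖ ≤ K := by
  simpa using hu.hasFDerivAt.le_of_lipschitzOn hs hlip

lemma Convex.ball_combo_subset {Z : Set E} (hZ : Convex ℝ Z) {xbar y : E} {r s : ℝ}
    (hball : ball xbar r ⊆ Z) (hy : y ∈ Z) (hs0 : 0 < s) (hs1 : s ≤ 1) :
    ball ((1 - s) • y + s • xbar) (s * r) ⊆ Z :=
  calc ball ((1 - s) • y + s • xbar) (s * r) = (1 - s) • {y} + s • ball xbar r := by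
        rw [_root_.smul_ball hs0.ne', Real.norm_of_nonneg hs0.le, Set.smul_set_singleton,
          singleton_add_ball]
    _ ⊆ (1 - s) • Z + s • Z := by gcongr; exact Set.singleton_subset_iff.2 hy
    _ ⊆ Z := hZ.set_combo_subset (by linarith) hs0.le (by ring)

lemma mul_norm_sub_le_of_closedBall {u : E → ℝ} {x y px py : E} {a b τ : ℝ} (hτ : 0 ≤ τ)
    (hx : ∀ z ∈ closedBall y τ, u x + ⟪px, z - x⟫ ≤ u z)
    (hxy : u y - u x - ⟪px, y - x⟫ ≤ a)
    (hy : ∀ z ∈ closedBall y τ, u z - u y - ⟪py, z - y⟫ ≤ b) :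
    τ * ‖px - py‖ ≤ a + b := by
  have hy_mem : y ∈ closedBall y τ := mem_closedBall_self hτ
  obtain hq | hq := eq_or_ne (px - py) 0
  · have ha : 0 ≤ a := by linarith [hx y hy_mem]
    have hb : 0 ≤ b := by simpa using hy y hy_mem
    rw [hq, norm_zero, mul_zero]
    positivity
  set z := y + (τ / ‖px - py‖) • (px - py)
  have hz : z ∈ closedBall y τ := by
    simp [z, norm_smul, abs_of_nonneg hτ, hq]
  have hinner : ⟪px - py, z - y⟫ = τ * ‖px - py‖ := by
    simp only [z, add_sub_cancel_left, inner_smul_right, real_inner_self_eq_norm_sq]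
    field_simp [norm_ne_zero_iff.2 hq]
  have h1 := hx z hz
  have h2 := hy z hz
  have hsplit : ⟪px, z - x⟫ = ⟪px, z - y⟫ + ⟪px, y - x⟫ := by
    rw [← inner_add_right, sub_add_sub_cancel]
  rw [← hinner, inner_sub_left]
  linarith

lemma norm_sub_le_mul_rpow_of_closedBall_subset {Z : Set E} {u : E → ℝ} {x y px py : E}
    {C ϱ α τ μ : ℝ} (hC : 0 ≤ C) (hα : 0 ≤ α) (hτ : 0 < τ) (hμ : 0 ≤ μ)
    (hball : closedBall y τ ⊆ Z) (hτϱ : τ < ϱ) (hxyϱ : ‖x - y‖ < ϱ) (hxyμ : ‖x - y‖ ≤ μ * τ)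
    (hpx : ∀ z ∈ Z, u x + ⟪px, z - x⟫ ≤ u z)
    (hpx_up : ∀ z ∈ Z ∩ ball x ϱ, u z - u x - ⟪px, z - x⟫ ≤ C * ‖z - x‖ ^ (1 + α))
    (hpy_up : ∀ z ∈ Z ∩ ball y ϱ, u z - u y - ⟪py, z - y⟫ ≤ C * ‖z - y‖ ^ (1 + α)) :
    ‖px - py‖ ≤ C * (μ ^ (1 + α) + 1) * τ ^ α := by
  have hy : y ∈ Z := hball (mem_closedBall_self hτ.le)
  have key := mul_norm_sub_le_of_closedBall (py := py) hτ.le (fun z hz => hpx z (hball hz))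
    (a := C * (μ * τ) ^ (1 + α)) (b := C * τ ^ (1 + α)) ?_ ?_
  · refine le_of_mul_le_mul_left ?_ hτ
    rw [Real.mul_rpow hμ hτ.le, Real.rpow_one_add' hτ.le (by linarith)] at key
    linarith
  · calc u y - u x - ⟪px, y - x⟫ ≤ C * ‖y - x‖ ^ (1 + α) :=
          hpx_up y ⟨hy, by rwa [mem_ball, dist_eq_norm, norm_sub_rev]⟩
      _ ≤ C * (μ * τ) ^ (1 + α) := by rw [norm_sub_rev]; gcongr
  · intro z hz
    rw [mem_closedBall, dist_eq_norm] at hz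
    calc u z - u y - ⟪py, z - y⟫ ≤ C * ‖z - y‖ ^ (1 + α) :=
          hpy_up z ⟨hball (by rwa [mem_closedBall, dist_eq_norm]), by
            rw [mem_ball, dist_eq_norm]; linarith⟩
      _ ≤ C * τ ^ (1 + α) := by gcongr

lemma norm_sub_le_mul_rpow_of_lt_min {Z : Set E} (hZ : Convex ℝ Z) {u : E → ℝ} {g : E → E}
    {xbar : E} {r R C ϱ α : ℝ} (hr : 0 < r) (hrR : r ≤ R) (hC : 0 ≤ C) (hα : 0 ≤ α)
    (hrZ : ball xbar r ⊆ Z) (hZR : Z ⊆ ball xbar R)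
    (hlow : ∀ x ∈ Z, ∀ z ∈ Z, u x + ⟪g x, z - x⟫ ≤ u z)
    (hup : ∀ x ∈ Z, ∀ z ∈ Z ∩ ball x ϱ, u z - u x - ⟪g x, z - x⟫ ≤ C * ‖z - x‖ ^ (1 + α))
    {x y : E} (hx : x ∈ Z) (hy : y ∈ Z) (hxy : ‖x - y‖ < min r (r * ϱ / R)) :
    ‖g x - g y‖ ≤ 3 * (C * ((2 * R / r) ^ (1 + α) + 1)) * ‖x - y‖ ^ α := by
  have hR : 0 < R := hr.trans_le hrR
  obtain rfl | hne := eq_or_ne x y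
  · simp only [sub_self, norm_zero]
    positivity
  have hd : 0 < ‖x - y‖ := norm_pos_iff.2 (sub_ne_zero.2 hne)
  set d := ‖x - y‖
  have hdr : d < r := hxy.trans_le (min_le_left _ _)
  have hdϱ : R / r * d < ϱ := by
    have := hxy.trans_le (min_le_right _ _)
    rw [lt_div_iff₀ hR] at this
    rw [div_mul_eq_mul_div, div_lt_iff₀ hr]
    linarith
  have hdR : d ≤ R / r * d := le_mul_of_one_le_left hd.le ((one_le_div hr).2 hrR)
  set s := d / r
  have hs0 : 0 < s := div_pos hd hr
  have hs1 : s ≤ 1 := (div_le_one hr).2 hdr.le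
  have hshift : ∀ w ∈ Z, closedBall ((1 - s) • w + s • xbar) (d / 2) ⊆ Z ∧
      ‖w - ((1 - s) • w + s • xbar)‖ ≤ 2 * R / r * (d / 2) := by
    intro w hw
    refine ⟨?_, ?_⟩
    · refine (closedBall_subset_ball (half_lt_self hd)).trans ?_
      simpa [s, div_mul_cancel₀ d hr.ne'] using hZ.ball_combo_subset hrZ hw hs0 hs1
    · have hw' : ‖w - xbar‖ < R := by simpa [dist_eq_norm] using hZR hw
      rw [show w - ((1 - s) • w + s • xbar) = s • (w - xbar) by module, norm_smul,
        Real.norm_of_nonneg hs0.le]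
      calc s * ‖w - xbar‖ ≤ s * R := by gcongr
        _ = 2 * R / r * (d / 2) := by simp only [s]; ring
  have hμτ : 2 * R / r * (d / 2) = R / r * d := by ring
  set xs := (1 - s) • x + s • xbar
  set ys := (1 - s) • y + s • xbar
  have hxs : ‖xs - ys‖ ≤ 2 * R / r * (d / 2) := by
    rw [show xs - ys = (1 - s) • (x - y) by module, norm_smul, Real.norm_of_nonneg (by linarith)]
    calc (1 - s) * d ≤ d := by nlinarith
      _ ≤ 2 * R / r * (d / 2) := by rw [hμτ]; exact hdR
  obtain ⟨hballx, hx_xs⟩ := hshift x hx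
  obtain ⟨hbally, hy_ys⟩ := hshift y hy
  have hxsZ : xs ∈ Z := hballx (mem_closedBall_self (by positivity))
  have hysZ : ys ∈ Z := hbally (mem_closedBall_self (by positivity))
  have hμ : 0 ≤ 2 * R / r := by positivity
  have hτϱ : d / 2 < ϱ := by linarith
  have step : ∀ v ∈ Z, ∀ w ∈ Z, closedBall w (d / 2) ⊆ Z → ‖v - w‖ ≤ 2 * R / r * (d / 2) →
      ‖g v - g w‖ ≤ C * ((2 * R / r) ^ (1 + α) + 1) * d ^ α := fun v hv w hw hball hvw =>
    (norm_sub_le_mul_rpow_of_closedBall_subset hC hα (by positivity) hμ hball hτϱ (by linarith) hvw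
      (hlow v hv) (hup v hv) (hup w hw)).trans
      (by gcongr; linarith)
  calc ‖g x - g y‖ ≤ ‖g x - g xs‖ + ‖g xs - g ys‖ + ‖g y - g ys‖ := by
        rw [norm_sub_rev (g y)]
        linarith [norm_sub_le_norm_sub_add_norm_sub (g x) (g xs) (g y),
          norm_sub_le_norm_sub_add_norm_sub (g xs) (g ys) (g y)]
    _ ≤ 3 * (C * ((2 * R / r) ^ (1 + α) + 1)) * d ^ α := by
        linarith [step x hx xs hxsZ hballx hx_xs, step xs hxsZ ys hysZ hbally hxs,
          step y hy ys hysZ hbally hy_ys]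

end InnerProductSpace

theorem convex_C1alpha_criterion_general (n : ℕ)
    (r R : ℝ) (K : NNReal) (C ϱ α : ℝ)
    (hr : 0 < r) (hrR : r ≤ R) (hC : 0 < C) (hϱ : 0 < ϱ) (hα : α ∈ Set.Ioc (0:ℝ) 1) :
    ∃ Cbar : ℝ, ∀ (Z : Set (EuclideanSpace ℝ (Fin n))) (xbar : EuclideanSpace ℝ (Fin n))
      (u : EuclideanSpace ℝ (Fin n) → ℝ),
      IsOpen Z → Convex ℝ Z → ball xbar r ⊆ Z → Z ⊆ ball xbar R →
      ConvexOn ℝ Z u → LipschitzOnWith K u Z →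
      (∀ x ∈ Z, ∃ p ∈ subgrad Z u x,
        ∀ z ∈ Z ∩ ball x ϱ, u z - u x - ⟪p, z - x⟫ ≤ C * ‖z - x‖ ^ (1 + α)) →
      (∀ x ∈ Z, DifferentiableAt ℝ u x) ∧
        ∀ x ∈ Z, ∀ y ∈ Z, ‖gradient u x - gradient u y‖ ≤ Cbar * ‖x - y‖ ^ α := by
  have hα0 : 0 < α := hα.1
  set δ := min r (r * ϱ / R)
  have hR : 0 < R := hr.trans_le hrR
  set A := 3 * (C * ((2 * R / r) ^ (1 + α) + 1))
  refine ⟨A + 2 * K / δ ^ α, fun Z xbar u hZ hZconv hrZ hZR _ hlip hsep => ?_⟩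
  have hgrad : ∀ x ∈ Z, HasGradientAt u (gradient u x) x ∧ gradient u x ∈ subgrad Z u x ∧
      ∀ z ∈ Z ∩ ball x ϱ, u z - u x - ⟪gradient u x, z - x⟫ ≤ C * ‖z - x‖ ^ (1 + α) := by
    intro x hx
    obtain ⟨p, hp, hp_up⟩ := hsep x hx
    have hpx := hasGradientAt_of_le_rpow (hZ.mem_nhds hx) hϱ hα0 hp hp_up
    rw [hpx.gradient]
    exact ⟨hpx, hp, hp_up⟩
  refine ⟨fun x hx => (hgrad x hx).1.differentiableAt, fun x hx y hy => ?_⟩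
  refine norm_sub_le_mul_rpow_of_local_of_bounded (by positivity) (lt_min hr (by positivity))
    hα0.le (fun x hx => (hgrad x hx).1.norm_le_of_lipschitzOn (hZ.mem_nhds hx) hlip) ?_ hx hy
  exact fun x hx y hy => norm_sub_le_mul_rpow_of_lt_min hZconv hr hrR hC.le hα0.le hrZ hZR
    (fun x hx => (hgrad x hx).2.1) (fun x hx => (hgrad x hx).2.2) hx hy

/-- **`C^{1,α}` criterion for convex functions** (Lemma 2.4, Figalli's Lemma A.32):
if a convex `K`-Lipschitz function on an open convex set `Z` with
`B_r(x̄) ⊆ Z ⊆ B_R(x̄)` separates from its supporting planes in a `C^{1,α}` fashion,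
then it is differentiable everywhere on `Z` and its gradient is `α`-Hölder on `Z`,
with a constant `C̄` depending only on `r, R, K, C, ϱ` (and `α, n`). -/
theorem convex_C1alpha_criterion (n : ℕ) (hn : 1 ≤ n)
    (r R : ℝ) (K : NNReal) (C ϱ α : ℝ)
    (hr : 0 < r) (hrR : r ≤ R) (hC : 0 < C) (hϱ : 0 < ϱ) (hα : α ∈ Set.Ioc (0:ℝ) 1) :
    ∃ Cbar : ℝ, ∀ (Z : Set (EuclideanSpace ℝ (Fin n))) (xbar : EuclideanSpace ℝ (Fin n))
      (u : EuclideanSpace ℝ (Fin n) → ℝ),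
      IsOpen Z → Convex ℝ Z → ball xbar r ⊆ Z → Z ⊆ ball xbar R →
      ConvexOn ℝ Z u → LipschitzOnWith K u Z →
      (∀ x ∈ Z, ∃ p ∈ subgrad Z u x,
        ∀ z ∈ Z ∩ ball x ϱ, u z - u x - ⟪p, z - x⟫ ≤ C * ‖z - x‖ ^ (1 + α)) →
      (∀ x ∈ Z, DifferentiableAt ℝ u x) ∧
        ∀ x ∈ Z, ∀ y ∈ Z, ‖gradient u x - gradient u y‖ ≤ Cbar * ‖x - y‖ ^ α :=
  convex_C1alpha_criterion_general n r R K C ϱ α hr hrR hC hϱ hα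
end

section
/- Let q > 2 and define u : [−1,1] → ℝ by u(x) = ((q−1)/q)( |x|^{q/(q−1)} − 1 ), so that u'(x) = sign(x)|x|^{1/(q−1)}. Then for every α with 1/(q−1) < α ≤ 1 and every δ ∈ (0,1], the derivative u' is not α-Hölder continuous on [−δ, δ]; that is, there is no constant C such that |u'(x) − u'(y)| ≤ C|x−y|^α for all x, y ∈ [−δ, δ]. Consequently, the C^{1,1/(q−1)} regularity of minimizers of ∫_{−1}^{1}(|v'|^q/q + v)dx over convex functions with zero boundary values is optimal for q > 2. -/
/-!
Since `u'(t) - u'(0) = t ^ (1/(q-1))` for `t > 0`, an `α`-Hölder bound at the pair `(t, 0)` would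
give `t ^ (1/(q-1)) ≤ C t ^ α`, i.e. `1 ≤ C t ^ (α - 1/(q-1))`, which fails as `t → 0⁺`.
-/

noncomputable def uq (q : ℝ) (x : ℝ) : ℝ := (q - 1) / q * (|x| ^ (q / (q - 1)) - 1)

open Set Filter Topology

theorem hasDerivAt_abs_rpow_sign {p : ℝ} (hp : 1 < p) (x : ℝ) :
    HasDerivAt (fun y : ℝ ↦ |y| ^ p) (p * Real.sign x * |x| ^ (p - 1)) x := by
  convert hasDerivAt_abs_rpow x hp using 1
  rcases lt_trichotomy x 0 with hx | rfl | hx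
  · rw [Real.sign_of_neg hx, abs_of_neg hx, show p - 1 = (p - 2) + 1 by ring,
      Real.rpow_add_one (by linarith)]
    ring
  · simp
  · rw [Real.sign_of_pos hx, abs_of_pos hx, show p - 1 = (p - 2) + 1 by ring,
      Real.rpow_add_one hx.ne']
    ring

theorem deriv_uq {q : ℝ} (hq : 1 < q) (x : ℝ) :
    deriv (uq q) x = Real.sign x * |x| ^ (1 / (q - 1)) := by
  have hq1 : q - 1 ≠ 0 := by linarith
  have hp : 1 < q / (q - 1) := by rw [lt_div_iff₀ (by linarith)]; linarith
  have hu : HasDerivAt (uq q)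
      ((q - 1) / q * (q / (q - 1) * Real.sign x * |x| ^ (q / (q - 1) - 1))) x :=
    ((hasDerivAt_abs_rpow_sign hp x).sub_const 1).const_mul ((q - 1) / q)
  rw [hu.deriv, show q / (q - 1) - 1 = 1 / (q - 1) by field_simp; ring]
  field_simp

theorem exists_mem_Ioo_mul_rpow_lt_rpow {β α δ : ℝ} (hβα : β < α) (hδ : 0 < δ) (C : ℝ) :
    ∃ t ∈ Ioo 0 δ, C * t ^ α < t ^ β := by
  have hsmall : Tendsto (fun t : ℝ ↦ C * t ^ (α - β)) (𝓝[>] 0) (𝓝 0) := by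
    have := (Real.continuousAt_rpow_const 0 (α - β) (.inr (sub_pos.2 hβα).le)).tendsto
    rw [Real.zero_rpow (sub_pos.2 hβα).ne'] at this
    simpa using (this.mono_left nhdsWithin_le_nhds).const_mul C
  obtain ⟨t, ⟨ht1, htδ⟩, ht0⟩ :=
    ((hsmall.eventually (gt_mem_nhds one_pos)).and
      (Ioo_mem_nhdsGT hδ)).and self_mem_nhdsWithin |>.exists
  refine ⟨t, htδ, ?_⟩
  calc C * t ^ α = t ^ β * (C * t ^ (α - β)) := by
        rw [mul_left_comm, ← Real.rpow_add ht0]; ring_nf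
    _ < t ^ β * 1 := mul_lt_mul_of_pos_left ht1 (Real.rpow_pos_of_pos ht0 β)
    _ = t ^ β := mul_one _

/-- **Optimality of the `C^{1,1/(q-1)}` regularity for `q > 2`** (Section 5): for the
explicit minimizer `u`, the derivative `u'(x) = sign(x)|x|^{1/(q-1)}` fails to be
`α`-Hölder on every interval `[-δ,δ]`, `0 < δ ≤ 1`, whenever `1/(q-1) < α ≤ 1`. -/
theorem optimal_regularity_q_gt_two (q : ℝ) (hq : 2 < q) :
    (∀ x ∈ Set.Ioo (-1 : ℝ) 1, deriv (uq q) x = Real.sign x * |x| ^ (1 / (q - 1))) ∧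
    ∀ α : ℝ, 1 / (q - 1) < α → α ≤ 1 → ∀ δ : ℝ, 0 < δ → δ ≤ 1 →
      ¬ ∃ C : ℝ, ∀ x ∈ Set.Icc (-δ) δ, ∀ y ∈ Set.Icc (-δ) δ,
          |deriv (uq q) x - deriv (uq q) y| ≤ C * |x - y| ^ α := by
  have hq1 : 1 < q := by linarith
  refine ⟨fun x _ ↦ deriv_uq hq1 x, fun α hα _ δ hδ _ ⟨C, hC⟩ ↦ ?_⟩
  obtain ⟨t, ⟨ht0, htδ⟩, hlt⟩ := exists_mem_Ioo_mul_rpow_lt_rpow hα hδ C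
  have hHolder := hC t ⟨by linarith, htδ.le⟩ 0 ⟨by linarith, hδ.le⟩
  rw [deriv_uq hq1, deriv_uq hq1, Real.sign_of_pos ht0, Real.sign_zero, zero_mul, sub_zero,
    sub_zero, one_mul, abs_of_pos ht0, abs_of_pos (Real.rpow_pos_of_pos ht0 _)] at hHolder
  linarith
end
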